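/- Assume 1 < α_min < 2, −2 < 2 − α_min − α_sess < −1 and α_sess < 2. Then c = ∫₀^∞ r(x) H̄_I(x) dx is finite, V(t) ~ 2ct as t → ∞, and for every t > 0 the difference V(Tt)/(T L_V(T) L_r(T)) − 2ct/(L_V(T) L_r(T)) tends to 0 as T → ∞ (so lim_{T→∞} V(Tt)/(T L_V(T) L_r(T)) = lim_{T→∞} 2ct/(L_V(T) L_r(T)) whenever the latter limit exists). -/

import Mathlib

/-!
Write `f = r · H̄_I` and `c = ∫₀^∞ f`. By the uniform convergence theorem (a consequence of
Egorov's theorem), a slowly varying `L` satisfies `x^(-ε) ≤ L x ≤ x^ε` eventually, so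
`f x ≤ K x^p` with `p = 2 - α_min - α_sess + 2ε ∈ (-2, -1)` and `f` is integrable.
Since `V t = 2 (c t - ∫₀^t G)` with `G y = ∫_y^∞ f = O(y^(p+1))`, the defect `c t - V t / 2`
is `O(t^(p+2)) = o(t^(1-2ε))`. Dividing by `t` gives `V t ~ 2 c t`; dividing by
`T L_V(T) L_r(T) ≥ T^(1-2ε)` gives the last claim.
-/

open MeasureTheory Filter Set

/-- A measurable, positive function `L` on `(0,∞)` is slowly varying at infinity if for
every `c > 0`, `L(cx)/L(x) → 1` as `x → ∞`. -/
def SlowlyVarying (L : ℝ → ℝ) : Prop :=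
  Measurable L ∧ (∀ x > 0, 0 < L x) ∧
    ∀ c > 0, Tendsto (fun x => L (c * x) / L x) atTop (nhds 1)

open scoped Topology

section AdditiveForm

variable {h : ℝ → ℝ}

lemma exists_abs_add_sub_lt_of_tendsto_add_sub (hm : Measurable h)
    (hconv : ∀ s, Tendsto (fun t => h (t + s) - h t) atTop (𝓝 0))
    {t u : ℕ → ℝ} (ht : Tendsto t atTop atTop) (hu : ∀ n, u n ∈ Icc (0:ℝ) 1)
    {ε : ℝ} (hε : 0 < ε) : ∃ n, |h (t n + u n) - h (t n)| < ε := by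
  have egorov : ∀ τ : ℕ → ℝ, Tendsto τ atTop atTop → ∃ E, volume E ≤ ENNReal.ofReal (1 / 4) ∧
      ∀ᶠ n in atTop, ∀ s ∈ Icc (0:ℝ) 2 \ E, |h (τ n + s) - h (τ n)| < ε / 2 := by
    intro τ hτ
    obtain ⟨E, -, -, hE, hunif⟩ := tendstoUniformlyOn_of_ae_tendsto (μ := volume)
      (fun n => ((hm.comp (measurable_const_add (τ n))).sub_const (h (τ n))).stronglyMeasurable)
      stronglyMeasurable_const measurableSet_Icc (by simp)
      (ae_of_all _ fun s _ => (hconv s).comp hτ) (by norm_num : (0:ℝ) < 1 / 4)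
    refine ⟨E, hE, ?_⟩
    filter_upwards [Metric.tendstoUniformlyOn_iff.1 hunif (ε / 2) (by positivity)] with n hn s hs
    simpa only [Pi.zero_apply, dist_zero_left, Real.norm_eq_abs, Function.comp_apply] using hn s hs
  obtain ⟨E, hE, hEn⟩ := egorov t ht
  obtain ⟨F, hF, hFn⟩ := egorov (fun n => t n + u n)
    (tendsto_atTop_mono (fun n => le_add_of_nonneg_right (hu n).1) ht)
  obtain ⟨n, hnE, hnF⟩ := (hEn.and hFn).exists
  -- `E` and the translate `F + u n` are too small to cover `[1, 2]`
  obtain ⟨s, hs, hsEF⟩ : (Icc (1:ℝ) 2 \ (E ∪ (fun x => x + -u n) ⁻¹' F)).Nonempty := by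
    refine Set.sdiff_nonempty.2 fun hcover => ?_
    have := (measure_mono hcover).trans (measure_union_le (μ := volume) _ _)
    rw [measure_preimage_add_right, Real.volume_Icc] at this
    have := this.trans (add_le_add hE hF)
    rw [← ENNReal.ofReal_add (by norm_num) (by norm_num),
      ENNReal.ofReal_le_ofReal_iff (by norm_num)] at this
    norm_num at this
  obtain ⟨hsE, hsF⟩ := not_or.1 hsEF
  have h1 := hnE s ⟨⟨by linarith [hs.1], hs.2⟩, hsE⟩
  have h2 := hnF (s - u n) ⟨⟨by linarith [hs.1, (hu n).2], by linarith [hs.2, (hu n).1]⟩,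
    by simpa [sub_eq_add_neg] using hsF⟩
  refine ⟨n, ?_⟩
  calc |h (t n + u n) - h (t n)|
      = |(h (t n + s) - h (t n)) - (h (t n + u n + (s - u n)) - h (t n + u n))| := by
        ring_nf
    _ ≤ |h (t n + s) - h (t n)| + |h (t n + u n + (s - u n)) - h (t n + u n)| := abs_sub _ _
    _ < ε := by linarith

/-- The uniform convergence theorem for slowly varying functions, in additive form. -/
theorem tendstoUniformlyOn_Icc_add_sub (hm : Measurable h)
    (hconv : ∀ s, Tendsto (fun t => h (t + s) - h t) atTop (𝓝 0)) :
    TendstoUniformlyOn (fun t u => h (t + u) - h t) 0 atTop (Icc 0 1) := by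
  refine Metric.tendstoUniformlyOn_iff.2 fun ε hε => ?_
  by_contra hfail
  obtain ⟨t, ht, u, hu, hbad⟩ : ∃ t : ℕ → ℝ, (∀ n : ℕ, (n : ℝ) ≤ t n) ∧ ∃ u : ℕ → ℝ,
      (∀ n, u n ∈ Icc (0:ℝ) 1) ∧ ∀ n, ε ≤ |h (t n + u n) - h (t n)| := by
    have := fun n : ℕ => frequently_atTop.1 (not_eventually.1 hfail) n
    choose t ht hnot using this
    simp only [not_forall, not_lt, Pi.zero_apply, dist_zero_left, Real.norm_eq_abs] at hnot
    choose u hu hbad using hnot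
    exact ⟨t, ht, u, hu, hbad⟩
  obtain ⟨n, hn⟩ := exists_abs_add_sub_lt_of_tendsto_add_sub hm hconv
    (tendsto_atTop_mono ht tendsto_natCast_atTop_atTop) hu hε
  exact (hbad n).not_gt hn

lemma abs_sub_le_mul_of_forall_Icc {T ε : ℝ}
    (hT : ∀ t ≥ T, ∀ u ∈ Icc (0:ℝ) 1, |h (t + u) - h t| ≤ ε) {x : ℝ} (hx : T ≤ x) :
    |h x - h T| ≤ (x - T + 1) * ε := by
  have step : ∀ n : ℕ, ∀ u ∈ Icc (0:ℝ) 1, |h (T + n + u) - h T| ≤ (n + 1) * ε := by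
    intro n
    induction n with
    | zero => simpa using hT T le_rfl
    | succ n ih =>
      intro u hu
      have hstep := hT (T + n + u) (by linarith [hu.1, n.cast_nonneg (α := ℝ)]) 1 (by simp)
      calc |h (T + ↑(n + 1) + u) - h T|
          = |(h (T + n + u + 1) - h (T + n + u)) + (h (T + n + u) - h T)| := by
            push_cast; ring_nf
        _ ≤ |h (T + n + u + 1) - h (T + n + u)| + |h (T + n + u) - h T| := abs_add_le _ _
        _ ≤ ((n + 1 : ℕ) + 1) * ε := by push_cast; linarith [ih u hu]
  have hn := Nat.floor_le (sub_nonneg.2 hx)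
  have hn' := Nat.lt_floor_add_one (x - T)
  have hε : 0 ≤ ε := (abs_nonneg _).trans (hT T le_rfl 0 (by simp))
  calc |h x - h T| = |h (T + ⌊x - T⌋₊ + (x - T - ⌊x - T⌋₊)) - h T| := by ring_nf
    _ ≤ (⌊x - T⌋₊ + 1) * ε := step _ _ ⟨by linarith, by linarith⟩
    _ ≤ (x - T + 1) * ε := by gcongr

theorem tendsto_div_of_tendsto_add_sub (hm : Measurable h)
    (hconv : ∀ s, Tendsto (fun t => h (t + s) - h t) atTop (𝓝 0)) :
    Tendsto (fun t => h t / t) atTop (𝓝 0) := by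
  refine Asymptotics.IsLittleO.tendsto_div_nhds_zero (Asymptotics.isLittleO_iff.2 fun c hc => ?_)
  obtain ⟨T, hT⟩ := eventually_atTop.1 (Metric.tendstoUniformlyOn_iff.1
    (tendstoUniformlyOn_Icc_add_sub hm hconv) (c / 2) (by positivity))
  have hT' : ∀ t ≥ T, ∀ u ∈ Icc (0:ℝ) 1, |h (t + u) - h t| ≤ c / 2 := fun t ht u hu => by
    simpa only [Pi.zero_apply, dist_zero_left, Real.norm_eq_abs] using (hT t ht u hu).le
  filter_upwards [eventually_ge_atTop T, eventually_ge_atTop (2 * |h T| / c + 1 - T),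
    eventually_ge_atTop 0] with x hxT hx hx0
  have hgrowth := abs_sub_le_mul_of_forall_Icc hT' hxT
  have hlarge : 2 * |h T| ≤ (x - 1 + T) * c := by
    rw [div_add' _ _ _ hc.ne', div_sub' hc.ne', div_le_iff₀ hc] at hx; linarith
  rw [Real.norm_eq_abs, Real.norm_eq_abs, abs_of_nonneg hx0]
  linarith [abs_sub_abs_le_abs_sub (h x) (h T)]

end AdditiveForm

namespace SlowlyVarying

variable {L : ℝ → ℝ}

theorem tendsto_log_div_log (hL : SlowlyVarying L) :
    Tendsto (fun x => Real.log (L x) / Real.log x) atTop (𝓝 0) := by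
  obtain ⟨hLm, hLpos, hLlim⟩ := hL
  set h : ℝ → ℝ := fun t => Real.log (L (Real.exp t))
  have hconv : ∀ s, Tendsto (fun t => h (t + s) - h t) atTop (𝓝 0) := by
    intro s
    have hlim := ((Real.continuousAt_log one_ne_zero).tendsto.comp
      ((hLlim _ (Real.exp_pos s)).comp Real.tendsto_exp_atTop))
    rw [Real.log_one] at hlim
    refine hlim.congr fun t => ?_
    simp only [h, Function.comp_apply, Real.exp_add, add_comm t s]
    rw [Real.log_div (hLpos _ (by positivity)).ne' (hLpos _ (Real.exp_pos t)).ne']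
  refine ((tendsto_div_of_tendsto_add_sub
    (Real.measurable_log.comp (hLm.comp Real.measurable_exp)) hconv).comp
    Real.tendsto_log_atTop).congr' ?_
  filter_upwards [eventually_gt_atTop 0] with x hx
  simp [Real.exp_log hx]

theorem eventually_le_rpow (hL : SlowlyVarying L) {ε : ℝ} (hε : 0 < ε) :
    ∀ᶠ x in atTop, L x ≤ x ^ ε := by
  filter_upwards [hL.tendsto_log_div_log.eventually (gt_mem_nhds hε),
    eventually_gt_atTop 1] with x hx hx1
  have hx0 : 0 < x := one_pos.trans hx1
  rw [div_lt_iff₀ (Real.log_pos hx1)] at hx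
  rw [← Real.exp_log (hL.2.1 x hx0), Real.rpow_def_of_pos hx0]
  exact Real.exp_le_exp.2 (by linarith)

theorem eventually_rpow_neg_le (hL : SlowlyVarying L) {ε : ℝ} (hε : 0 < ε) :
    ∀ᶠ x in atTop, x ^ (-ε) ≤ L x := by
  filter_upwards [hL.tendsto_log_div_log.eventually (lt_mem_nhds (neg_lt_zero.2 hε)),
    eventually_gt_atTop 1] with x hx hx1
  have hx0 : 0 < x := one_pos.trans hx1
  rw [lt_div_iff₀ (Real.log_pos hx1)] at hx
  rw [← Real.exp_log (hL.2.1 x hx0), Real.rpow_def_of_pos hx0]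
  exact Real.exp_le_exp.2 (by linarith)

theorem mul {M : ℝ → ℝ} (hL : SlowlyVarying L) (hM : SlowlyVarying M) :
    SlowlyVarying (fun x => L x * M x) :=
  ⟨hL.1.mul hM.1, fun x hx => mul_pos (hL.2.1 x hx) (hM.2.1 x hx), fun c hc => by
    simpa only [mul_div_mul_comm, mul_one] using (hL.2.2 c hc).mul (hM.2.2 c hc)⟩

theorem eventually_rpow_mul_le (hL : SlowlyVarying L) (a : ℝ) {ε : ℝ} (hε : 0 < ε) :
    ∀ᶠ x in atTop, x ^ a * L x ≤ x ^ (a + ε) := by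
  filter_upwards [hL.eventually_le_rpow hε, eventually_gt_atTop 0] with x hx hx0
  rw [Real.rpow_add hx0]
  gcongr

end SlowlyVarying

section TailIntegral

variable {f : ℝ → ℝ}

lemma setIntegral_Ioi_pos {a : ℝ} (hf : IntegrableOn f (Ioi a)) (hpos : ∀ x > a, 0 < f x) :
    0 < ∫ x in Ioi a, f x := by
  rw [setIntegral_pos_iff_support_of_nonneg_ae
    (ae_restrict_of_forall_mem measurableSet_Ioi fun x hx => (hpos x hx).le) hf,
    inter_eq_right.2 fun x (hx : x ∈ Ioi a) => Function.mem_support.2 (hpos x hx).ne',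
    Real.volume_Ioi]
  exact ENNReal.zero_lt_top

lemma antitoneOn_setIntegral_Ioi {a : ℝ} (hf : IntegrableOn f (Ioi a))
    (hf0 : ∀ x > a, 0 ≤ f x) : AntitoneOn (fun y => ∫ x in Ioi y, f x) (Ici a) :=
  fun _ hy _ _ hyz => setIntegral_mono_set (hf.mono_set (Ioi_subset_Ioi hy))
    (ae_restrict_of_forall_mem measurableSet_Ioi fun x hx => hf0 x (hy.trans_lt hx))
    (Ioi_subset_Ioi hyz).eventuallyLE

lemma eventually_setIntegral_Ioi_le {a K p : ℝ} (hf : IntegrableOn f (Ioi a))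
    (hle : ∀ᶠ x in atTop, f x ≤ K * x ^ p) (hp : p < -1) :
    ∀ᶠ y in atTop, ∫ x in Ioi y, f x ≤ K / (-(p + 1)) * y ^ (p + 1) := by
  obtain ⟨A, hA⟩ := eventually_atTop.1 hle
  filter_upwards [eventually_ge_atTop A, eventually_ge_atTop a, eventually_gt_atTop 0]
    with y hyA hya hy0
  calc ∫ x in Ioi y, f x ≤ ∫ x in Ioi y, K * x ^ p :=
        setIntegral_mono_on (hf.mono_set (Ioi_subset_Ioi hya))
          ((integrableOn_Ioi_rpow_of_lt hp hy0).const_mul K) measurableSet_Ioi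
          fun x hx => hA x (hyA.trans hx.le)
    _ = K / (-(p + 1)) * y ^ (p + 1) := by
        rw [integral_const_mul, integral_Ioi_rpow_of_lt hp hy0]
        field_simp

lemma integral_integral_eq_mul_sub (hf : IntegrableOn f (Ioi 0)) {t : ℝ} (ht : 0 ≤ t) :
    ∫ y in (0:ℝ)..t, ∫ x in (0:ℝ)..y, f x
      = (∫ x in Ioi 0, f x) * t - ∫ y in (0:ℝ)..t, ∫ x in Ioi y, f x := by
  have hf' : IntegrableOn f (uIcc 0 t) := by
    rw [uIcc_of_le ht, integrableOn_Icc_iff_integrableOn_Ioc]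
    exact hf.mono_set Ioc_subset_Ioi_self
  have htail : EqOn (fun y => ∫ x in Ioi y, f x)
      (fun y => (∫ x in Ioi 0, f x) - ∫ x in (0:ℝ)..y, f x) (uIcc 0 t) := fun y hy => by
    rw [uIcc_of_le ht] at hy
    dsimp only
    rw [← intervalIntegral.integral_Ioi_sub_Ioi hf hy.1, sub_sub_cancel]
  have hint : IntervalIntegrable (fun y => ∫ x in Ioi y, f x) volume 0 t :=
    ((continuousOn_const.sub (intervalIntegral.continuousOn_primitive_interval hf')).congr
      htail).intervalIntegrable
  calc ∫ y in (0:ℝ)..t, ∫ x in (0:ℝ)..y, f x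
      = ∫ y in (0:ℝ)..t, ((∫ x in Ioi 0, f x) - ∫ x in Ioi y, f x) :=
        intervalIntegral.integral_congr fun y hy => by
          have := htail hy; dsimp only at this; linarith
    _ = (∫ x in Ioi 0, f x) * t - ∫ y in (0:ℝ)..t, ∫ x in Ioi y, f x := by
        rw [intervalIntegral.integral_sub intervalIntegrable_const hint,
          intervalIntegral.integral_const, smul_eq_mul, sub_zero, mul_comm]


lemma integrableOn_Ioi_of_eventually_le_rpow {a K p : ℝ}
    (hloc : LocallyIntegrableOn f (Ici a)) (hf0 : ∀ᶠ x in atTop, 0 ≤ f x)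
    (hle : ∀ᶠ x in atTop, f x ≤ K * x ^ p) (hp : p < -1) : IntegrableOn f (Ioi a) := by
  refine (hloc.integrableOn_of_isBigO_atTop (g := fun x => x ^ p) ?_
    (integrableAtFilter_rpow_atTop_iff.2 hp)).mono_set Ioi_subset_Ici_self
  refine Asymptotics.IsBigO.of_bound K ?_
  filter_upwards [hf0, hle, eventually_gt_atTop 0] with x h0 hx hx0
  rwa [Real.norm_of_nonneg h0, Real.norm_of_nonneg (Real.rpow_nonneg hx0.le _)]

lemma AntitoneOn.locallyIntegrableOn_continuousOn_mul {g H : ℝ → ℝ} {a : ℝ}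
    (hH : AntitoneOn H (Ici a)) (hg : ContinuousOn g (Ici a)) :
    LocallyIntegrableOn (fun x => g x * H x) (Ici a) :=
  (locallyIntegrableOn_iff isClosed_Ici.isLocallyClosed).2 fun _ hk hkc =>
    ((hH.mono hk).integrableOn_isCompact hkc).continuousOn_mul (hg.mono hk) hkc

end TailIntegral

lemma tendsto_intervalIntegral_div_rpow {G : ℝ → ℝ} {C q β : ℝ} (hG0 : ∀ y ≥ 0, 0 ≤ G y)
    (hanti : AntitoneOn G (Ici 0)) (hle : ∀ᶠ y in atTop, G y ≤ C * y ^ q) (hq : -1 < q)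
    (hβ : q + 1 < β) : Tendsto (fun t => (∫ y in (0:ℝ)..t, G y) / t ^ β) atTop (𝓝 0) := by
  obtain ⟨A, hA⟩ := eventually_atTop.1 (hle.and (eventually_gt_atTop 0))
  have hA0 : 0 < A := (hA A le_rfl).2
  have hint : ∀ a b, 0 ≤ a → a ≤ b → IntervalIntegrable G volume a b := fun a b ha hab =>
    (hanti.mono fun y hy => ha.trans (by rw [uIcc_of_le hab] at hy; exact hy.1))
      |>.intervalIntegrable
  set M := (∫ y in (0:ℝ)..A, G y) - C * (A ^ (q + 1) / (q + 1))
  have hbound : ∀ t ≥ A, ∫ y in (0:ℝ)..t, G y ≤ M + C / (q + 1) * t ^ (q + 1) := by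
    intro t ht
    have hpow : ContinuousOn (fun y : ℝ => y ^ q) (uIcc A t) := fun y hy =>
      (Real.continuousAt_rpow_const _ _ (Or.inl (hA0.trans_le (by
        rw [uIcc_of_le ht] at hy; exact hy.1)).ne')).continuousWithinAt
    have htail : ∫ y in A..t, G y ≤ ∫ y in A..t, C * y ^ q :=
      intervalIntegral.integral_mono_on ht (hint A t hA0.le ht)
        (hpow.intervalIntegrable.const_mul C) fun y hy => (hA y hy.1).1
    rw [← intervalIntegral.integral_add_adjacent_intervals (hint 0 A le_rfl hA0.le)
      (hint A t hA0.le ht)]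
    rw [intervalIntegral.integral_const_mul, integral_rpow (Or.inl hq)] at htail
    have hsplit : C * ((t ^ (q + 1) - A ^ (q + 1)) / (q + 1))
        = C / (q + 1) * t ^ (q + 1) - C * (A ^ (q + 1) / (q + 1)) := by ring
    simp only [M]
    linarith
  have hlim : Tendsto (fun t => M * t ^ (-β) + C / (q + 1) * t ^ (-(β - (q + 1)))) atTop
      (𝓝 0) := by
    have := ((tendsto_rpow_neg_atTop (by linarith : 0 < β)).const_mul M).add
      ((tendsto_rpow_neg_atTop (by linarith : 0 < β - (q + 1))).const_mul (C / (q + 1)))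
    rwa [mul_zero, mul_zero, add_zero] at this
  refine squeeze_zero' ?_ ?_ hlim
  · filter_upwards [eventually_ge_atTop 0] with t ht
    exact div_nonneg (intervalIntegral.integral_nonneg ht fun y hy => hG0 y hy.1)
      (Real.rpow_nonneg ht _)
  · filter_upwards [eventually_ge_atTop A] with t ht
    have ht0 : 0 < t := hA0.trans_le ht
    calc (∫ y in (0:ℝ)..t, G y) / t ^ β ≤ (M + C / (q + 1) * t ^ (q + 1)) / t ^ β :=
          div_le_div_of_nonneg_right (hbound t ht) (Real.rpow_nonneg ht0.le _)
      _ = M * t ^ (-β) + C / (q + 1) * t ^ (-(β - (q + 1))) := by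
          rw [Real.rpow_neg ht0.le, Real.rpow_neg ht0.le, Real.rpow_sub ht0]
          field_simp

section PowerDecay

variable {f : ℝ → ℝ} {K p : ℝ}

theorem tendsto_mul_sub_integral_integral_div_rpow (hf : IntegrableOn f (Ioi 0))
    (hf0 : ∀ x > 0, 0 ≤ f x) (hle : ∀ᶠ x in atTop, f x ≤ K * x ^ p) (hp : -2 < p)
    (hp' : p < -1) {β : ℝ} (hβ : p + 2 < β) :
    Tendsto (fun t => ((∫ x in Ioi 0, f x) * t - ∫ y in (0:ℝ)..t, ∫ x in (0:ℝ)..y, f x) / t ^ β)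
      atTop (𝓝 0) := by
  refine (tendsto_intervalIntegral_div_rpow
    (fun y hy => setIntegral_nonneg measurableSet_Ioi fun x hx => hf0 x (hy.trans_lt hx))
    (antitoneOn_setIntegral_Ioi hf hf0) (eventually_setIntegral_Ioi_le hf hle hp')
    (by linarith) (by linarith)).congr' ?_
  filter_upwards [eventually_ge_atTop 0] with t ht
  rw [integral_integral_eq_mul_sub hf ht, sub_sub_cancel]

theorem tendsto_integral_integral_div_mul (hf : IntegrableOn f (Ioi 0))
    (hf0 : ∀ x > 0, 0 ≤ f x) (hle : ∀ᶠ x in atTop, f x ≤ K * x ^ p) (hp : -2 < p)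
    (hp' : p < -1) (hc : 0 < ∫ x in Ioi 0, f x) :
    Tendsto (fun t => (∫ y in (0:ℝ)..t, ∫ x in (0:ℝ)..y, f x) / ((∫ x in Ioi 0, f x) * t))
      atTop (𝓝 1) := by
  have hdefect := (tendsto_mul_sub_integral_integral_div_rpow hf hf0 hle hp hp'
    (β := 1) (by linarith)).div_const (∫ x in Ioi 0, f x)
  have hlim := tendsto_const_nhds (x := (1:ℝ)).sub hdefect
  rw [zero_div, sub_zero] at hlim
  refine hlim.congr' ?_
  filter_upwards [eventually_gt_atTop 0] with t ht
  rw [Real.rpow_one]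
  field_simp
  ring

theorem tendsto_integral_integral_div_sub (hf : IntegrableOn f (Ioi 0))
    (hf0 : ∀ x > 0, 0 ≤ f x) (hle : ∀ᶠ x in atTop, f x ≤ K * x ^ p) (hp : -2 < p)
    (hp' : p < -1) {ℓ : ℝ → ℝ} {γ : ℝ} (hℓ : ∀ᶠ T in atTop, T ^ (-γ) ≤ ℓ T)
    (hγ : p + 2 < 1 - γ) {t : ℝ} (ht : 0 < t) :
    Tendsto (fun T => (∫ y in (0:ℝ)..T * t, ∫ x in (0:ℝ)..y, f x) / (T * ℓ T)
      - (∫ x in Ioi 0, f x) * t / ℓ T) atTop (𝓝 0) := by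
  have hdefect := (tendsto_mul_sub_integral_integral_div_rpow hf hf0 hle hp hp' hγ).comp
    (tendsto_id.atTop_mul_const ht)
  have hbdd : IsBoundedUnder (· ≤ ·) atTop fun T => ‖-t ^ (1 - γ) * (T ^ (-γ) / ℓ T)‖ := by
    refine isBoundedUnder_of_eventually_le (a := t ^ (1 - γ)) ?_
    filter_upwards [hℓ, eventually_gt_atTop 0] with T hT hT0
    have hpos : 0 < T ^ (-γ) := Real.rpow_pos_of_pos hT0 _
    rw [norm_mul, norm_neg, Real.norm_of_nonneg (Real.rpow_nonneg ht.le _),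
      Real.norm_of_nonneg (div_nonneg hpos.le (hpos.trans_le hT).le)]
    exact mul_le_of_le_one_right (Real.rpow_nonneg ht.le _)
      ((div_le_one (hpos.trans_le hT)).2 hT)
  refine (hdefect.zero_mul_isBoundedUnder_le hbdd).congr' ?_
  filter_upwards [hℓ, eventually_gt_atTop 0] with T hT hT0
  have hℓ0 : 0 < ℓ T := (Real.rpow_pos_of_pos hT0 _).trans_le hT
  simp only [Function.comp_apply, id]
  rw [Real.mul_rpow hT0.le ht.le, Real.rpow_sub hT0, Real.rpow_one, Real.rpow_neg hT0.le]
  field_simp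
  ring

end PowerDecay

theorem eventually_mul_setIntegral_Ioi_le_rpow {Lr LV r H : ℝ → ℝ} {K a b ε : ℝ}
    (hLr : SlowlyVarying Lr) (hLV : SlowlyVarying LV) (hr : ∀ x > 0, r x = K * x ^ a * Lr x)
    (hH : ∀ x > 0, H x = x ^ (-b) * LV x) (hHint : IntegrableOn H (Ioi 0)) (hK : 0 ≤ K)
    (hε : 0 < ε) (hb : ε < b - 1) :
    ∀ᶠ x in atTop, r x * ∫ z in Ioi x, H z ≤ K / (b - 1 - ε) * x ^ (a + 1 - b + 2 * ε) := by
  have hHle : ∀ᶠ x in atTop, H x ≤ 1 * x ^ (-b + ε) := by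
    filter_upwards [hLV.eventually_rpow_mul_le (-b) hε, eventually_gt_atTop 0] with x hx hx0
    rwa [hH x hx0, one_mul]
  filter_upwards [eventually_setIntegral_Ioi_le hHint hHle (by linarith),
    hLr.eventually_rpow_mul_le a hε, eventually_gt_atTop 0] with x hI hrx hx0
  have hI0 : 0 ≤ ∫ z in Ioi x, H z := setIntegral_nonneg measurableSet_Ioi fun z hz => by
    have hz0 : 0 < z := hx0.trans hz
    rw [hH z hz0]
    exact mul_nonneg (Real.rpow_nonneg hz0.le _) (hLV.2.1 z hz0).le
  calc r x * ∫ z in Ioi x, H z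
      ≤ (K * x ^ (a + ε)) * (1 / (-(-b + ε + 1)) * x ^ (-b + ε + 1)) := by
        refine mul_le_mul ?_ hI hI0 (by positivity)
        rw [hr x hx0, mul_assoc]
        exact mul_le_mul_of_nonneg_left hrx hK
    _ = K / (b - 1 - ε) * x ^ (a + 1 - b + 2 * ε) := by
        rw [show a + 1 - b + 2 * ε = (a + ε) + (-b + ε + 1) by ring,
          Real.rpow_add hx0 (a + ε), show -(-b + ε + 1) = b - 1 - ε by ring]
        ring

theorem variance_asymptotics_case4_general
    (αmin αsess μmax μW : ℝ)
    (hαmin : 1 < αmin ∧ αmin < 2)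
    (hcase : -2 < 2 - αmin - αsess ∧ 2 - αmin - αsess < -1)
    (hμmax : 0 < μmax) (hμW : 0 < μW)
    (σlim2 : ℝ)
    (hσlim2 : σlim2 = 2 * μmax ^ 2 / (μW ^ 3 * (αmin - 1) * (3 - αmin) * (2 - αmin)))
    (L_r L_V : ℝ → ℝ) (hLr : SlowlyVarying L_r) (hLV : SlowlyVarying L_V)
    -- the autocovariance `r` of the stationary on-off process
    (r : ℝ → ℝ) (hr_cont : ContinuousOn r (Set.Ici 0))
    (hr : ∀ u > (0:ℝ), r u = σlim2 / 2 * (3 - αmin) * (2 - αmin) * u ^ (1 - αmin) * L_r u)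
    -- the survival function `H̄` of the lifetime distribution, with finite mean
    (Hbar : ℝ → ℝ)
    (hHbar_nn : ∀ x, 0 ≤ Hbar x)
    (hHbar : ∀ x > (0:ℝ), Hbar x = x ^ (-αsess) * L_V x)
    (hHbar_int : IntegrableOn Hbar (Set.Ioi 0))
    -- the integrated tail `H̄_I`
    (HbarI : ℝ → ℝ) (hHbarI : ∀ x, HbarI x = ∫ z in Set.Ioi x, Hbar z)
    -- the variance of the integrated process
    (V : ℝ → ℝ)
    (hV : ∀ t, V t = 2 * ∫ y in (0:ℝ)..t, ∫ x in (0:ℝ)..y, r x * HbarI x) :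
    IntegrableOn (fun x => r x * HbarI x) (Set.Ioi 0) ∧
    Tendsto (fun t => V t / (2 * (∫ x in Set.Ioi (0:ℝ), r x * HbarI x) * t))
      atTop (nhds 1) ∧
    ∀ t > (0:ℝ),
      Tendsto (fun T => V (T * t) / (T * L_V T * L_r T)
          - 2 * (∫ x in Set.Ioi (0:ℝ), r x * HbarI x) * t / (L_V T * L_r T))
        atTop (nhds 0) := by
  obtain ⟨hα1, hα2⟩ := hαmin
  obtain rfl : HbarI = fun x => ∫ z in Ioi x, Hbar z := funext hHbarI
  have hK : 0 < σlim2 / 2 * (3 - αmin) * (2 - αmin) := by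
    have : 0 < αmin - 1 := by linarith
    have : 0 < 3 - αmin := by linarith
    have : 0 < 2 - αmin := by linarith
    rw [hσlim2]
    positivity
  set ε := (αmin + αsess - 3) / 8 with hε
  have hε0 : 0 < ε := by linarith
  have hf_pos : ∀ x > 0, 0 < r x * ∫ z in Ioi x, Hbar z := fun x hx => by
    refine mul_pos ?_ (setIntegral_Ioi_pos (hHbar_int.mono_set (Ioi_subset_Ioi hx.le))
      fun z hz => ?_)
    · rw [hr x hx]
      exact mul_pos (mul_pos hK (Real.rpow_pos_of_pos hx _)) (hLr.2.1 x hx)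
    · rw [hHbar z (hx.trans hz)]
      exact mul_pos (Real.rpow_pos_of_pos (hx.trans hz) _) (hLV.2.1 z (hx.trans hz))
  have hf0 : ∀ x > 0, 0 ≤ r x * ∫ z in Ioi x, Hbar z := fun x hx => (hf_pos x hx).le
  have hf_le := eventually_mul_setIntegral_Ioi_le_rpow hLr hLV hr hHbar hHbar_int hK.le hε0
    (by linarith)
  have hf_int : IntegrableOn (fun x => r x * ∫ z in Ioi x, Hbar z) (Ioi 0) :=
    integrableOn_Ioi_of_eventually_le_rpow
      ((antitoneOn_setIntegral_Ioi hHbar_int fun x _ => hHbar_nn x)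
        |>.locallyIntegrableOn_continuousOn_mul hr_cont)
      ((eventually_gt_atTop 0).mono hf0) hf_le (by linarith)
  refine ⟨hf_int, ?_, fun t ht => ?_⟩
  · refine (tendsto_integral_integral_div_mul hf_int hf0 hf_le (by linarith) (by linarith)
      (setIntegral_Ioi_pos hf_int hf_pos)).congr fun t => ?_
    rw [hV, mul_assoc, mul_div_mul_left _ _ two_ne_zero]
  · have hdiff := tendsto_integral_integral_div_sub hf_int hf0 hf_le (by linarith) (by linarith)
      ((hLV.mul hLr).eventually_rpow_neg_le (by positivity : 0 < 2 * ε)) (by linarith) ht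
    have hdiff2 := hdiff.const_mul 2
    rw [mul_zero] at hdiff2
    refine hdiff2.congr fun T => ?_
    rw [hV]
    ring

/-- Case 4 of the variance lemma: if `1 < α_min < 2`,
`−2 < 2 − α_min − α_sess < −1` and `α_sess < 2`, then `c = ∫₀^∞ r(x) H̄_I(x) dx` is
finite, `V(t) ~ 2ct` as `t → ∞`, and for every `t > 0`,
`V(Tt)/(T L_V(T) L_r(T)) − 2ct/(L_V(T) L_r(T)) → 0` as `T → ∞`. Here
`V(t) = 2∫₀^t∫₀^y r(x) H̄_I(x) dx dy`. -/
theorem variance_asymptotics_case4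
    (αmin αsess μmax μW : ℝ)
    (hαmin : 1 < αmin ∧ αmin < 2)
    (hcase : -2 < 2 - αmin - αsess ∧ 2 - αmin - αsess < -1)
    (hαsess : αsess < 2)
    (hμmax : 0 < μmax) (hμW : 0 < μW)
    (σlim2 : ℝ)
    (hσlim2 : σlim2 = 2 * μmax ^ 2 / (μW ^ 3 * (αmin - 1) * (3 - αmin) * (2 - αmin)))
    (L_r L_V : ℝ → ℝ) (hLr : SlowlyVarying L_r) (hLV : SlowlyVarying L_V)
    -- the autocovariance `r` of the stationary on-off process
    (r : ℝ → ℝ) (hr_cont : ContinuousOn r (Set.Ici 0))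
    (hr : ∀ u > (0:ℝ), r u = σlim2 / 2 * (3 - αmin) * (2 - αmin) * u ^ (1 - αmin) * L_r u)
    -- the survival function `H̄` of the lifetime distribution, with finite mean
    (Hbar : ℝ → ℝ) (hHbar_meas : Measurable Hbar)
    (hHbar_nn : ∀ x, 0 ≤ Hbar x) (hHbar_le : ∀ x > (0:ℝ), Hbar x ≤ 1)
    (hHbar : ∀ x > (0:ℝ), Hbar x = x ^ (-αsess) * L_V x)
    (hHbar_int : IntegrableOn Hbar (Set.Ioi 0))
    -- the integrated tail `H̄_I`
    (HbarI : ℝ → ℝ) (hHbarI : ∀ x, HbarI x = ∫ z in Set.Ioi x, Hbar z)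
    -- the variance of the integrated process
    (V : ℝ → ℝ)
    (hV : ∀ t, V t = 2 * ∫ y in (0:ℝ)..t, ∫ x in (0:ℝ)..y, r x * HbarI x) :
    IntegrableOn (fun x => r x * HbarI x) (Set.Ioi 0) ∧
    Tendsto (fun t => V t / (2 * (∫ x in Set.Ioi (0:ℝ), r x * HbarI x) * t))
      atTop (nhds 1) ∧
    ∀ t > (0:ℝ),
      Tendsto (fun T => V (T * t) / (T * L_V T * L_r T)
          - 2 * (∫ x in Set.Ioi (0:ℝ), r x * HbarI x) * t / (L_V T * L_r T))
        atTop (nhds 0) :=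
  variance_asymptotics_case4_general αmin αsess μmax μW hαmin hcase hμmax hμW σlim2 hσlim2 L_r L_V
    hLr hLV r hr_cont hr Hbar hHbar_nn hHbar hHbar_int HbarI hHbarI V hV
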